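/- arXiv:1406.3306 — 4 statements merged into one kernel-verified Lean document; each statement's English description precedes it below -/
import Mathlib

section
/- Let Q be a forcing poset, N a set, and q ∈ Q. Then q is strongly N-generic if and only if there is a function r ↦ r↾N defined on all r ≤ q such that r↾N ∈ N ∩ Q and every v ≤ r↾N in N ∩ Q is compatible with r in Q. -/
/-- Two conditions are compatible if they have a common lower bound. -/
def Compat {Q : Type*} [Preorder Q] (x y : Q) : Prop := ∃ z, z ≤ x ∧ z ≤ y

/-- Compatibility within a subposet `P`. -/
def CompatIn {Q : Type*} [Preorder Q] (P : Set Q) (x y : Q) : Prop :=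
  ∃ z ∈ P, z ≤ x ∧ z ≤ y

/-- `A` is a maximal antichain of the subposet `P`. -/
def IsMaxAntichainIn {Q : Type*} [Preorder Q] (P A : Set Q) : Prop :=
  A ⊆ P ∧ (∀ a ∈ A, ∀ b ∈ A, a ≠ b → ¬ CompatIn P a b) ∧
    ∀ p ∈ P, ∃ a ∈ A, CompatIn P p a

/-- `G` is a filter on the subposet `P`. -/
def IsFilterOn {Q : Type*} [Preorder Q] (P G : Set Q) : Prop :=
  G ⊆ P ∧ G.Nonempty ∧ (∀ p ∈ G, ∀ q ∈ P, p ≤ q → q ∈ G) ∧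
    ∀ p ∈ G, ∀ q ∈ G, ∃ r ∈ G, r ≤ p ∧ r ≤ q

/-- `G` is a (V-)generic filter on the subposet `P`: it meets every
maximal antichain of `P` (all of which lie in the ground model `V`). -/
def IsGenericOn {Q : Type*} [Preorder Q] (P G : Set Q) : Prop :=
  IsFilterOn P G ∧ ∀ A : Set Q, IsMaxAntichainIn P A → (G ∩ A).Nonempty

/-- `P` is a regular suborder of `Q`: elements of `P` compatible in `Q` are
compatible in `P`, and every maximal antichain of `P` is a maximal antichain of `Q`. -/
def IsRegularSuborder {Q : Type*} [Preorder Q] (P : Set Q) : Prop :=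
  (∀ p ∈ P, ∀ q ∈ P, Compat p q → CompatIn P p q) ∧
    ∀ A : Set Q, IsMaxAntichainIn P A → IsMaxAntichainIn Set.univ A

/-- `q` is a strongly `N`-generic condition: every set `D` dense in the subposet
`N ∩ Q` (here `N` denotes the trace `N ∩ Q`, a set of conditions) is predense
in `Q` below `q`. -/
def StronglyGeneric {Q : Type*} [Preorder Q] (N : Set Q) (q : Q) : Prop :=
  ∀ D : Set Q, D ⊆ N → (∀ p ∈ N, ∃ d ∈ D, d ≤ p) →
    ∀ r, r ≤ q → ∃ d ∈ D, Compat r d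

/-! For `r ≤ q`, the conditions of `N` that are either incompatible with `r` or restrictions
of `r` form a dense subset of `N`; strong genericity of `q` makes one of them compatible with
`r`, so it is a restriction. Conversely, a set `D` dense in `N` has an element below `r↾N`,
which is then compatible with `r`. -/

/-- `d` plays the role of `r↾N`. -/
def IsRestriction {Q : Type*} [Preorder Q] (N : Set Q) (r d : Q) : Prop :=
  d ∈ N ∧ ∀ v ∈ N, v ≤ d → Compat r v

section Restriction

variable {Q : Type*} [Preorder Q] {N : Set Q}

theorem exists_le_incompat_or_isRestriction (r : Q) {p : Q} (hp : p ∈ N) :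
    ∃ d ∈ N, (¬ Compat r d ∨ IsRestriction N r d) ∧ d ≤ p := by
  by_cases h : ∃ v ∈ N, v ≤ p ∧ ¬ Compat r v
  · obtain ⟨v, hvN, hvp, hv⟩ := h
    exact ⟨v, hvN, Or.inl hv, hvp⟩
  · push Not at h
    exact ⟨p, hp, Or.inr ⟨hp, h⟩, le_rfl⟩

theorem StronglyGeneric.exists_isRestriction {q : Q} (hq : StronglyGeneric N q) {r : Q}
    (hr : r ≤ q) : ∃ d, IsRestriction N r d := by
  obtain ⟨d, ⟨-, hd⟩, hrd⟩ :=
    hq {d | d ∈ N ∧ (¬ Compat r d ∨ IsRestriction N r d)} (fun _ hd => hd.1)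
      (fun p hp => by
        obtain ⟨d, hdN, hd, hdp⟩ := exists_le_incompat_or_isRestriction r hp
        exact ⟨d, ⟨hdN, hd⟩, hdp⟩)
      r hr
  exact ⟨d, hd.resolve_left (not_not.mpr hrd)⟩

theorem stronglyGeneric_of_exists_isRestriction {q : Q}
    (h : ∀ r, r ≤ q → ∃ d, IsRestriction N r d) : StronglyGeneric N q := by
  intro D hDN hD r hr
  obtain ⟨d, hdN, hd⟩ := h r hr
  obtain ⟨e, heD, hed⟩ := hD d hdN
  exact ⟨e, heD, hd e (hDN heD) hed⟩

theorem stronglyGeneric_iff_exists_isRestriction {q : Q} :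
    StronglyGeneric N q ↔ ∀ r, r ≤ q → ∃ d, IsRestriction N r d :=
  ⟨fun hq _ hr => hq.exists_isRestriction hr, stronglyGeneric_of_exists_isRestriction⟩

end Restriction

/-- `q` is strongly `N`-generic iff there is a restriction map
`r ↦ r↾N` defined on all `r ≤ q` with `r↾N ∈ N ∩ Q`, such that every
`v ≤ r↾N` in `N ∩ Q` is compatible with `r`. -/
theorem stmt_7 {Q : Type*} [Preorder Q] (N : Set Q) (q : Q) :
    StronglyGeneric N q ↔
      ∃ f : Q → Q, ∀ r, r ≤ q →
        f r ∈ N ∧ ∀ v ∈ N, v ≤ f r → Compat r v := by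
  rw [stronglyGeneric_iff_exists_isRestriction]
  constructor
  · intro h
    have h' : ∀ r, ∃ d, r ≤ q → IsRestriction N r d := by
      intro r
      by_cases hr : r ≤ q
      · exact (h r hr).imp fun _ hd _ => hd
      · exact ⟨r, fun hr' => absurd hr' hr⟩
    choose f hf using h'
    exact ⟨f, hf⟩
  · rintro ⟨f, hf⟩ r hr
    exact ⟨f r, hf r hr⟩
end

section
/- Let P and Q be forcing posets, N a set, p a universal strongly (N,P)-generic condition, and q a universal strongly (N,Q)-generic condition. Then (p,q) is a universal strongly (N, P × Q)-generic condition. -/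
/-!
Given `D` dense in `N ∩ (P × Q)` and `(r₁, r₂) ≤ (p, q)`, first use the genericity of `q`:
for each `a₀ ∈ N ∩ P` the second coordinates of the elements of `D` lying below `a₀` in the
first coordinate form a dense subset of `N ∩ Q`, so one of them is compatible with `r₂`.
Hence the first coordinates `a` of those `(a, b) ∈ D` with `b` compatible with `r₂` are dense
in `N ∩ P`, and the genericity of `p` makes one of them compatible with `r₁`.
-/

theorem Compat.prodMk {P Q : Type*} [Preorder P] [Preorder Q] {a a' : P} {b b' : Q}
    (ha : Compat a a') (hb : Compat b b') : Compat (a, b) (a', b') := by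
  obtain ⟨c, hca, hca'⟩ := ha
  obtain ⟨d, hdb, hdb'⟩ := hb
  exact ⟨(c, d), ⟨hca, hdb⟩, ⟨hca', hdb'⟩⟩

section StronglyGeneric

variable {P Q : Type*} [Preorder P] [Preorder Q] {NP : Set P} {NQ : Set Q}

theorem StronglyGeneric.dense_fst_of_compat_snd {q r : Q} (hq : StronglyGeneric NQ q)
    (hr : r ≤ q) {D : Set (P × Q)} (hDN : D ⊆ NP ×ˢ NQ)
    (hD : ∀ x ∈ NP ×ˢ NQ, ∃ d ∈ D, d ≤ x) :
    ∀ a₀ ∈ NP, ∃ a ∈ {a | a ∈ NP ∧ ∃ b, (a, b) ∈ D ∧ Compat r b}, a ≤ a₀ := by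
  intro a₀ ha₀
  have hF_dense : ∀ b₀ ∈ NQ, ∃ b ∈ {b | ∃ a ≤ a₀, (a, b) ∈ D}, b ≤ b₀ := by
    intro b₀ hb₀
    obtain ⟨⟨a, b⟩, hab, hle⟩ := hD (a₀, b₀) ⟨ha₀, hb₀⟩
    exact ⟨b, ⟨a, hle.1, hab⟩, hle.2⟩
  obtain ⟨b, ⟨a, hle, hab⟩, hrb⟩ :=
    hq {b | ∃ a ≤ a₀, (a, b) ∈ D} (fun _ ⟨_, _, hab⟩ => (hDN hab).2) hF_dense r hr
  exact ⟨a, ⟨(hDN hab).1, b, hab, hrb⟩, hle⟩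

theorem StronglyGeneric.prod {p : P} {q : Q} (hp : StronglyGeneric NP p)
    (hq : StronglyGeneric NQ q) : StronglyGeneric (NP ×ˢ NQ) (p, q) := by
  rintro D hDN hD ⟨r₁, r₂⟩ ⟨hr₁, hr₂⟩
  obtain ⟨a, ⟨-, b, hab, hr₂b⟩, hr₁a⟩ :=
    hp _ (fun _ ha => ha.1) (hq.dense_fst_of_compat_snd hr₂ hDN hD) r₁ hr₁
  exact ⟨(a, b), hab, hr₁a.prodMk hr₂b⟩

end StronglyGeneric

/-- if `p` is a universal strongly `(N,P)`-generic condition and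
`q` is a universal strongly `(N,Q)`-generic condition (universality: compatible
with every element of the trace of `N`), then `(p,q)` is a universal strongly
`(N, P × Q)`-generic condition, where `N ∩ (P × Q)` is identified with pairs
from `N ∩ P` and `N ∩ Q`. -/
theorem stmt_11 {P Q : Type*} [Preorder P] [Preorder Q]
    (NP : Set P) (NQ : Set Q) (p : P) (q : Q)
    (hp : StronglyGeneric NP p) (hpu : ∀ x ∈ NP, Compat x p)
    (hq : StronglyGeneric NQ q) (hqu : ∀ x ∈ NQ, Compat x q) :
    StronglyGeneric (NP ×ˢ NQ) (p, q) ∧ ∀ x ∈ NP ×ˢ NQ, Compat x (p, q) :=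
  ⟨hp.prod hq, fun x hx => (hpu x.1 hx.1).prodMk (hqu x.2 hx.2)⟩
end

section
/- Let P be a forcing poset with greatest lower bounds, N a set, and q a universal strongly N-generic condition. Then the function f: N ∩ P → P/q defined by f(p) = q ∧ p is a regular embedding. -/
/-!
Strong genericity makes every maximal antichain `A` of `N` predense below `q`: the conditions
of `N` lying below some element of `A` form a dense subset of `N`. Hence every `r ≤ q` has an
extension `s` below some `a ∈ A`, and `s ≤ q ∧ a` because meets are greatest lower bounds.
Compatibility is reflected since `q ∧ p ≤ p`, and elementarity brings a common extension of
`p, p'` back into `N`.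
-/

theorem Compat.symm {Q : Type*} [Preorder Q] {x y : Q} (h : Compat x y) : Compat y x :=
  let ⟨z, hzx, hzy⟩ := h
  ⟨z, hzy, hzx⟩

theorem CompatIn.compat {Q : Type*} [Preorder Q] {S : Set Q} {x y : Q} (h : CompatIn S x y) :
    Compat x y :=
  let ⟨z, _, hzx, hzy⟩ := h
  ⟨z, hzx, hzy⟩

def IsCompatMeet {Q : Type*} [Preorder Q] (meet : Q → Q → Q) : Prop :=
  ∀ x y : Q, Compat x y → meet x y ≤ x ∧ meet x y ≤ y ∧ ∀ z, z ≤ x → z ≤ y → z ≤ meet x y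

namespace IsCompatMeet

variable {Q : Type*} [Preorder Q] {meet : Q → Q → Q} {q p p' z : Q}

theorem meet_le_left (hm : IsCompatMeet meet) (h : Compat q p) : meet q p ≤ q :=
  (hm q p h).1

theorem meet_le_right (hm : IsCompatMeet meet) (h : Compat q p) : meet q p ≤ p :=
  (hm q p h).2.1

theorem le_meet (hm : IsCompatMeet meet) (h : Compat q p) (hzq : z ≤ q) (hzp : z ≤ p) :
    z ≤ meet q p :=
  (hm q p h).2.2 z hzq hzp

theorem meet_mono_right (hm : IsCompatMeet meet) (hp : Compat q p) (hp' : Compat q p')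
    (hle : p ≤ p') : meet q p ≤ meet q p' :=
  hm.le_meet hp' (hm.meet_le_left hp) ((hm.meet_le_right hp).trans hle)

theorem compat_of_compat_meet (hm : IsCompatMeet meet) (hp : Compat q p) (hp' : Compat q p')
    (h : Compat (meet q p) (meet q p')) : Compat p p' :=
  let ⟨z, hz, hz'⟩ := h
  ⟨z, hz.trans (hm.meet_le_right hp), hz'.trans (hm.meet_le_right hp')⟩

end IsCompatMeet

section Antichain

variable {Q : Type*} [Preorder Q] {N A : Set Q}

theorem IsMaxAntichainIn.dense_below (hA : IsMaxAntichainIn N A) :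
    ∀ p ∈ N, ∃ d ∈ {d ∈ N | ∃ a ∈ A, d ≤ a}, d ≤ p := by
  intro p hp
  obtain ⟨a, ha, z, hzN, hzp, hza⟩ := hA.2.2 p hp
  exact ⟨z, ⟨hzN, a, ha, hza⟩, hzp⟩

theorem StronglyGeneric.exists_compat_of_isMaxAntichainIn {q r : Q} (hq : StronglyGeneric N q)
    (hA : IsMaxAntichainIn N A) (hr : r ≤ q) : ∃ a ∈ A, Compat r a := by
  obtain ⟨d, ⟨-, a, ha, hda⟩, s, hsr, hsd⟩ := hq _ (fun _ hd => hd.1) hA.dense_below r hr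
  exact ⟨a, ha, s, hsr, hsd.trans hda⟩

end Antichain

/-- `P` has greatest lower bounds (`meet` on compatible pairs),
`N` is (the trace on `P` of) an elementary substructure `N ≺ (H(χ),∈,P)` --
whose relevant consequence is that elements of `N` compatible in `P` are
compatible in `N` -- and `q` is a universal strongly `N`-generic condition.
Then `f : N ∩ P → P/q`, `f(p) = q ∧ p`, is a regular embedding: it maps into
`P/q = {r : r ≤ q}`, preserves order, reflects compatibility, and maps maximal
antichains of `N ∩ P` to maximal antichains of `P/q`. -/
theorem stmt_13 {P : Type*} [Preorder P]
    (meet : P → P → P)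
    (hmeet : ∀ x y : P, Compat x y →
      meet x y ≤ x ∧ meet x y ≤ y ∧ ∀ z, z ≤ x → z ≤ y → z ≤ meet x y)
    (N : Set P) (q : P)
    (hq : StronglyGeneric N q) (hu : ∀ p ∈ N, Compat p q)
    (hN : ∀ p ∈ N, ∀ p' ∈ N, Compat p p' → CompatIn N p p') :
    (∀ p ∈ N, meet q p ≤ q) ∧
    (∀ p ∈ N, ∀ p' ∈ N, p ≤ p' → meet q p ≤ meet q p') ∧
    (∀ p ∈ N, ∀ p' ∈ N,
      CompatIn {r | r ≤ q} (meet q p) (meet q p') → CompatIn N p p') ∧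
    (∀ A : Set P, IsMaxAntichainIn N A →
      IsMaxAntichainIn {r | r ≤ q} ((fun p => meet q p) '' A)) := by
  have hqN : ∀ p ∈ N, Compat q p := fun p hp => (hu p hp).symm
  have hmeet' : IsCompatMeet meet := hmeet
  have reflect : ∀ p ∈ N, ∀ p' ∈ N,
      CompatIn {r | r ≤ q} (meet q p) (meet q p') → CompatIn N p p' := fun p hp p' hp' h =>
    hN p hp p' hp' (hmeet'.compat_of_compat_meet (hqN p hp) (hqN p' hp') h.compat)
  refine ⟨fun p hp => hmeet'.meet_le_left (hqN p hp),
    fun p hp p' hp' => hmeet'.meet_mono_right (hqN p hp) (hqN p' hp'), reflect,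
    fun A hA => ⟨?_, ?_, ?_⟩⟩
  · rintro _ ⟨a, ha, rfl⟩
    exact hmeet'.meet_le_left (hqN a (hA.1 ha))
  · rintro _ ⟨a, ha, rfl⟩ _ ⟨b, hb, rfl⟩ hne hab
    exact hA.2.1 a ha b hb (fun h => hne (h ▸ rfl)) (reflect a (hA.1 ha) b (hA.1 hb) hab)
  · intro r hr
    obtain ⟨a, ha, s, hsr, hsa⟩ := hq.exists_compat_of_isMaxAntichainIn hA hr
    have hsq : s ≤ q := hsr.trans hr
    exact ⟨meet q a, ⟨a, ha, rfl⟩, s, hsq, hsr, hmeet'.le_meet (hqN a (hA.1 ha)) hsq hsa⟩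
end

section
/- Let S₀ and S₁ be disjoint stationary subsets of ω₁, and let Q be the disjoint sum of the club-shooting posets P_{S₀} and P_{S₁}. Then Q is not strongly proper on a stationary set: for every countable N ≺ H(χ) containing the relevant parameters, there is i ∈ {0,1} such that the condition (i, ∅) has no strongly N-generic extension. -/
open FirstOrder

/-- The relations of the language of set theory: a single binary relation `mem`. -/
inductive memRel : ℕ → Type
  | mem : memRel 2

/-- The language of set theory. -/
def memLang : FirstOrder.Language := ⟨fun _ => Empty, memRel⟩

/-- The ∈-structure on (the subtype of) the elements of a set `A`. -/
def memStruct (A : ZFSet) : memLang.Structure {x : ZFSet // x ∈ A} where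
  funMap := fun f _ => Empty.elim f
  RelMap | .mem => fun x => (x 0).1 ∈ (x 1).1

/-- `N` is an elementary substructure of `(A, ∈)`: `N ⊆ A` and every first-order
formula of the language of set theory with parameters from `N` holds in `(N, ∈)`
iff it holds in `(A, ∈)`. -/
def ElemSub (N A : ZFSet) : Prop :=
  N ⊆ A ∧ ∀ (n : ℕ) (φ : memLang.Formula (Fin n)) (v : Fin n → {x : ZFSet // x ∈ A})
    (hv : ∀ i, (v i).1 ∈ N),
    (letI := memStruct N
     φ.Realize (fun i => (⟨(v i).1, hv i⟩ : {x : ZFSet // x ∈ N}))) ↔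
    (letI := memStruct A
     φ.Realize v)

/-- Intersection of two ZF-sets. -/
noncomputable def zinter (a b : ZFSet) : ZFSet := ZFSet.sep (fun y => y ∈ b) a

/-- `x` is a (von Neumann) ordinal: a transitive set of transitive sets. -/
def IsOrd (x : ZFSet) : Prop := x.IsTransitive ∧ ∀ y ∈ x, ZFSet.IsTransitive y

/-- `b` is countable in the transitive set `W`: some surjection from `ω` onto `b`
(coded as a set of ordered pairs) belongs to `W`. -/
def CountableIn (W b : ZFSet) : Prop :=
  ∃ f, f ∈ W ∧ (∀ z ∈ f, ∃ n ∈ ZFSet.omega, ∃ y ∈ b, z = ZFSet.pair n y) ∧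
    (∀ n y y', ZFSet.pair n y ∈ f → ZFSet.pair n y' ∈ f → y = y') ∧
    ∀ y ∈ b, ∃ n ∈ ZFSet.omega, ZFSet.pair n y ∈ f

/-- `C ⊆ κ` is club in `κ`: unbounded and closed. -/
def ClubIn (kappa C : ZFSet) : Prop :=
  C ⊆ kappa ∧ (∀ α ∈ kappa, ∃ β ∈ C, α ∈ β) ∧
    ∀ α ∈ kappa, zinter C α ≠ ∅ → ZFSet.sUnion (zinter C α) = α → α ∈ C

/-- `S` is a stationary subset of `κ`: it meets every club subset of `κ`. -/
def StationaryIn (kappa S : ZFSet) : Prop :=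
  S ⊆ kappa ∧ ∀ C, ClubIn kappa C → zinter C S ≠ ∅

/-- `p` is a condition of the Abraham–Shelah club-shooting poset `P_S`. -/
def IsPS (omega1 S p : ZFSet) : Prop :=
  p.toSet.Finite ∧
    (∀ z ∈ p, ∃ α ∈ S, ∃ β ∈ omega1, (α ∈ β ∨ α = β) ∧ z = ZFSet.pair α β) ∧
    ∀ α β α' β' : ZFSet, ZFSet.pair α β ∈ p → ZFSet.pair α' β' ∈ p →
      ¬ (α ∈ α' ∧ (α' ∈ β ∨ α' = β))

/-- `q` is a condition of `Q`, the disjoint sum of `P_{S₀}` and `P_{S₁}`: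
a pair `(i, p)` with `i ∈ {0, 1}` and `p ∈ P_{S_i}`. -/
def IsQ (omega1 S₀ S₁ q : ZFSet) : Prop :=
  ∃ p : ZFSet, (q = ZFSet.pair ∅ p ∧ IsPS omega1 S₀ p) ∨
    (q = ZFSet.pair {∅} p ∧ IsPS omega1 S₁ p)

/-- The order of `Q`: `(j,q) ≤ (i,p)` iff `i = j` and `p ⊆ q`. -/
def QleQ (q' q : ZFSet) : Prop :=
  ∃ i p p' : ZFSet, q = ZFSet.pair i p ∧ q' = ZFSet.pair i p' ∧ p ⊆ p'

/-- Compatibility in `Q`. -/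
def QCompat (omega1 S₀ S₁ a b : ZFSet) : Prop :=
  ∃ r, IsQ omega1 S₀ S₁ r ∧ QleQ r a ∧ QleQ r b

/-- `q` is a strongly `(N, Q)`-generic condition: every set `D` dense in the
subposet `N ∩ Q` is predense below `q`. -/
def StronglyGenericQ (omega1 S₀ S₁ N q : ZFSet) : Prop :=
  ∀ D : Set ZFSet, (∀ d ∈ D, IsQ omega1 S₀ S₁ d ∧ d ∈ N) →
    (∀ p, IsQ omega1 S₀ S₁ p → p ∈ N → ∃ d ∈ D, QleQ d p) →
    ∀ r, IsQ omega1 S₀ S₁ r → QleQ r q → ∃ d ∈ D, QCompat omega1 S₀ S₁ r d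

/-!
Let `δ = sup (N ∩ ω₁)`, a countable ordinal. As `S₀` and `S₁` are disjoint, `δ ∉ S_i` for some `i`.
Any condition `(i, p)` extends to one containing a pair `⟨α, β⟩` with `α < δ ≤ β`: either `p`
already has one, or we add `⟨α, δ⟩` for some `α ∈ N ∩ S_i` above the coordinates of `p` below `δ`
(here `δ ∉ S_i` is needed). Pick `c₀ ∈ N ∩ ω₁` above `α`. By elementarity, the conditions in `N`
whose `i`-part has a first coordinate in `(c₀, δ)` are dense in `N ∩ Q`, and none of them is
compatible with the extension, since `P_{S_i}` forbids `α < a ≤ β`. Hence no condition below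
`(i, ∅)` is strongly `N`-generic.
-/

open ZFSet

lemma IsOrd.isOrdinal {x : ZFSet} (h : IsOrd x) : x.IsOrdinal :=
  isOrdinal_iff_forall_mem_isTransitive.2 h

lemma mem_zinter {a b x : ZFSet} : x ∈ zinter a b ↔ x ∈ a ∧ x ∈ b := mem_sep

lemma zinter_ne_empty {a b : ZFSet} : zinter a b ≠ ∅ ↔ ∃ x, x ∈ a ∧ x ∈ b := by
  simp [Ne, eq_empty, mem_zinter]

structure IsOmegaOne (ω₁ : ZFSet) : Prop where
  isOrdinal : ω₁.IsOrdinal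
  not_countable : ¬ ω₁.toSet.Countable
  countable_of_mem : ∀ α ∈ ω₁, α.toSet.Countable

namespace IsOmegaOne

variable {ω₁ : ZFSet} (hω : IsOmegaOne ω₁)
include hω

lemma mem_of_countable {x : ZFSet} (hx : x.IsOrdinal) (hc : x.toSet.Countable) : x ∈ ω₁ := by
  rcases hx.mem_trichotomous hω.isOrdinal with h | rfl | h
  · exact h
  · exact absurd hc hω.not_countable
  · exact absurd (hc.mono (hx.subset_of_mem h)) hω.not_countable

lemma empty_mem : ∅ ∈ ω₁ :=
  hω.mem_of_countable isOrdinal_empty (Set.countable_empty.mono fun y hy => notMem_empty y hy)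

lemma insert_self_mem {α : ZFSet} (hα : α ∈ ω₁) : insert α α ∈ ω₁ :=
  hω.mem_of_countable (isOrdinal_succ (hω.isOrdinal.mem hα))
    (by
      rw [show (insert α α).toSet = insert α α.toSet from coe_insert α α]
      exact (hω.countable_of_mem α hα).insert α)

lemma exists_upper_bound {T : Set ZFSet} (hT : T.Countable) (hTω : ∀ x ∈ T, x ∈ ω₁) :
    ∃ m ∈ ω₁, ∀ x ∈ T, x ∈ m := by
  by_contra! h
  -- otherwise `ω₁ ⊆ ⋃_{x ∈ T} (x + 1)` would be countable
  refine hω.not_countable ((hT.biUnion fun x hx =>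
    hω.countable_of_mem _ (hω.insert_self_mem (hTω x hx))).mono fun m hm => ?_)
  obtain ⟨x, hxT, hxm⟩ := h m hm
  rcases (hω.isOrdinal.mem (hTω x hxT)).mem_trichotomous (hω.isOrdinal.mem hm) with h | rfl | h
  · exact absurd h hxm
  · exact Set.mem_biUnion hxT (mem_insert x x)
  · exact Set.mem_biUnion hxT (mem_insert_of_mem x h)

end IsOmegaOne

lemma StationaryIn.exists_mem_gt {ω₁ S : ZFSet} (hS : StationaryIn ω₁ S) (hω : IsOmegaOne ω₁)
    {ξ : ZFSet} (hξ : ξ ∈ ω₁) : ∃ c ∈ S, ξ ∈ c := by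
  have hclub : ClubIn ω₁ (ZFSet.sep (ξ ∈ ·) ω₁) := by
    refine ⟨fun β hβ => (mem_sep.1 hβ).1, fun α hα => ?_, fun α hα hne _ => ?_⟩
    · obtain ⟨m, hm, hub⟩ := hω.exists_upper_bound (T := {ξ, α}) (by simp)
        (by rintro x (rfl | rfl) <;> assumption)
      exact ⟨m, mem_sep.2 ⟨hm, hub ξ (by simp)⟩, hub α (by simp)⟩
    · obtain ⟨β, hβC, hβα⟩ := zinter_ne_empty.1 hne
      exact mem_sep.2 ⟨hα, (hω.isOrdinal.mem hα).mem_trans (mem_sep.1 hβC).2 hβα⟩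
  obtain ⟨c, hcC, hcS⟩ := zinter_ne_empty.1 (hS.2 _ hclub)
  exact ⟨c, hcS, (mem_sep.1 hcC).2⟩

section ClubShooting

variable {ω₁ S : ZFSet}

lemma IsPS.finite_field {p : ZFSet} (hp : IsPS ω₁ S p) :
    {u | ∃ z ∈ p, ∃ w ∈ z, u ∈ w}.Finite := by
  refine (hp.1.biUnion (t := fun z => ⋃ w ∈ z.toSet, w.toSet) fun z hz => ?_).subset
    fun u ⟨z, hz, w, hw, hu⟩ => Set.mem_biUnion hz (Set.mem_biUnion hw hu)
  obtain ⟨a, -, b, -, -, rfl⟩ := hp.2.1 z hz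
  rw [show (pair a b).toSet = {{a}, {a, b}} from coe_pair a b]
  refine (Set.toFinite _).biUnion fun w hw =>
    (Set.toFinite ({a, b} : Set ZFSet)).subset fun u hu => ?_
  rcases hw with rfl | rfl
  · exact Or.inl (mem_singleton.1 hu)
  · exact mem_pair.1 hu

lemma IsPS.of_pair_mem {p a b : ZFSet} (hp : IsPS ω₁ S p) (h : pair a b ∈ p) :
    a ∈ S ∧ b ∈ ω₁ ∧ (a ∈ b ∨ a = b) := by
  obtain ⟨α, hα, β, hβ, hαβ, e⟩ := hp.2.1 _ h
  obtain ⟨rfl, rfl⟩ := pair_injective e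
  exact ⟨hα, hβ, hαβ⟩

lemma IsPS.mem_of_mem_field {p : ZFSet} (hp : IsPS ω₁ S p) (hS : S ⊆ ω₁) :
    ∀ z ∈ p, ∀ w ∈ z, ∀ u ∈ w, u ∈ ω₁ := by
  intro z hz w hw u hu
  obtain ⟨a, ha, b, hb, -, rfl⟩ := hp.2.1 z hz
  rcases mem_pair.1 hw with rfl | rfl
  · exact mem_singleton.1 hu ▸ hS ha
  · rcases mem_pair.1 hu with rfl | rfl
    exacts [hS ha, hb]

lemma IsPS.insert_pair {p α β : ZFSet} (hp : IsPS ω₁ S p) (hα : α ∈ S) (hβ : β ∈ ω₁)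
    (hαβ : α ∈ β ∨ α = β)
    (hsep : ∀ a b, pair a b ∈ p → ¬ (a ∈ α ∧ (α ∈ b ∨ α = b)) ∧ ¬ (α ∈ a ∧ (a ∈ β ∨ a = β))) :
    IsPS ω₁ S (insert (pair α β) p) := by
  refine ⟨?_, fun z hz => ?_, fun a b a' b' h h' => ?_⟩
  · rw [show (insert (pair α β) p).toSet = insert (pair α β) p.toSet from coe_insert _ _]
    exact hp.1.insert _
  · rcases mem_insert_iff.1 hz with rfl | hz
    exacts [⟨α, hα, β, hβ, hαβ, rfl⟩, hp.2.1 z hz]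
  rcases mem_insert_iff.1 h with e | hm <;> rcases mem_insert_iff.1 h' with e' | hm'
  · obtain ⟨rfl, -⟩ := pair_injective e
    obtain ⟨rfl, -⟩ := pair_injective e'
    exact fun h => mem_irrefl _ h.1
  · obtain ⟨rfl, rfl⟩ := pair_injective e
    exact (hsep a' b' hm').2
  · obtain ⟨rfl, rfl⟩ := pair_injective e'
    exact (hsep a b hm).1
  · exact hp.2.2 a b a' b' hm hm'

lemma IsPS.insert_pair_self {p c : ZFSet} (hp : IsPS ω₁ S p) (hcS : c ∈ S) (hc : c ∈ ω₁)
    (hpc : ∀ a b, pair a b ∈ p → a ∈ c ∧ b ∈ c) : IsPS ω₁ S (insert (pair c c) p) :=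
  hp.insert_pair hcS hc (Or.inr rfl) fun a b hab =>
    ⟨fun ⟨_, h⟩ => h.elim (mem_asymm (hpc a b hab).2) fun h => mem_irrefl b (h ▸ (hpc a b hab).2),
      fun ⟨h, _⟩ => mem_asymm h (hpc a b hab).1⟩

end ClubShooting

section SumPoset

variable {ω₁ S₀ S₁ : ZFSet}

lemma empty_ne_singleton_empty : (∅ : ZFSet) ≠ {∅} :=
  fun h => notMem_empty ∅ ((ZFSet.ext_iff.1 h ∅).2 (mem_singleton.2 rfl))

lemma isQ_pair_empty_iff {p : ZFSet} : IsQ ω₁ S₀ S₁ (pair ∅ p) ↔ IsPS ω₁ S₀ p := by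
  refine ⟨fun ⟨p', h⟩ => ?_, fun h => ⟨p, Or.inl ⟨rfl, h⟩⟩⟩
  rcases h with ⟨h, hp'⟩ | ⟨h, -⟩
  · exact (pair_injective h).2 ▸ hp'
  · exact absurd (pair_injective h).1 empty_ne_singleton_empty

lemma isQ_pair_singleton_empty_iff {p : ZFSet} : IsQ ω₁ S₀ S₁ (pair {∅} p) ↔ IsPS ω₁ S₁ p := by
  refine ⟨fun ⟨p', h⟩ => ?_, fun h => ⟨p, Or.inr ⟨rfl, h⟩⟩⟩
  rcases h with ⟨h, -⟩ | ⟨h, hp'⟩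
  · exact absurd (pair_injective h).1.symm empty_ne_singleton_empty
  · exact (pair_injective h).2 ▸ hp'

lemma qleQ_pair_iff {r i p : ZFSet} : QleQ r (pair i p) ↔ ∃ p', r = pair i p' ∧ p ⊆ p' := by
  refine ⟨fun ⟨j, s, s', h, hr, hss'⟩ => ?_, fun ⟨p', hr, hpp'⟩ => ⟨i, p, p', rfl, hr, hpp'⟩⟩
  obtain ⟨rfl, rfl⟩ := pair_injective h
  exact ⟨s', hr, hss'⟩

lemma pair_qleQ_iff {q i p : ZFSet} : QleQ (pair i p) q ↔ ∃ s, q = pair i s ∧ s ⊆ p := by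
  refine ⟨fun ⟨j, s, s', hq, h, hss'⟩ => ?_, fun ⟨s, hq, hsp⟩ => ⟨i, s, p, hq, rfl, hsp⟩⟩
  obtain ⟨rfl, rfl⟩ := pair_injective h
  exact ⟨s, hq, hss'⟩

lemma IsQ.qleQ_refl {q : ZFSet} (hq : IsQ ω₁ S₀ S₁ q) : QleQ q q := by
  obtain ⟨p, ⟨rfl, -⟩ | ⟨rfl, -⟩⟩ := hq <;> exact qleQ_pair_iff.2 ⟨p, rfl, subset_rfl⟩

end SumPoset

structure IsClosedTransitive (H : ZFSet) : Prop where
  isTransitive : H.IsTransitive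
  empty_mem : ∅ ∈ H
  insert_mem : ∀ x ∈ H, ∀ y ∈ H, insert x y ∈ H

lemma isClosedTransitive_of_forall_mem_iff {χ : Cardinal} (hχ : Cardinal.aleph0 < χ) {H : ZFSet}
    (hH : ∀ x, x ∈ H ↔ ∃ t : ZFSet, t.IsTransitive ∧ x ⊆ t ∧ Cardinal.mk t.toSet < χ) :
    IsClosedTransitive H where
  isTransitive x hx y hy := by
    obtain ⟨t, ht, hxt, hcard⟩ := (hH x).1 hx
    exact (hH y).2 ⟨t, ht, ht.subset_of_mem (hxt hy), hcard⟩
  empty_mem := (hH ∅).2 ⟨∅, isTransitive_empty, fun _ h => h, by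
    rw [show (∅ : ZFSet).toSet = ∅ from coe_empty, Cardinal.mk_eq_zero]
    exact Cardinal.aleph0_pos.trans hχ⟩
  insert_mem x hx y hy := by
    obtain ⟨t, ht, hxt, hcard⟩ := (hH x).1 hx
    obtain ⟨t', ht', hyt', hcard'⟩ := (hH y).1 hy
    refine (hH _).2 ⟨insert x (t ∪ t'), fun w hw => ?_, fun w hw => ?_, ?_⟩
    · rcases mem_insert_iff.1 hw with rfl | hw
      · exact fun u hu => mem_insert_of_mem _ (mem_union.2 (Or.inl (hxt hu)))
      · exact (ht.union ht' w hw).trans fun u hu => mem_insert_of_mem _ hu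
    · rcases mem_insert_iff.1 hw with rfl | hw
      · exact mem_insert _ _
      · exact mem_insert_of_mem _ (mem_union.2 (Or.inr (hyt' hw)))
    · have hχ₁ := Cardinal.one_lt_aleph0.trans hχ
      rw [show (insert x (t ∪ t')).toSet = insert x (t.toSet ∪ t'.toSet) from
        (coe_insert _ _).trans (congrArg _ (coe_union _ _))]
      exact Cardinal.mk_insert_le.trans_lt (Cardinal.add_lt_of_lt hχ.le
        ((Cardinal.mk_union_le _ _).trans_lt (Cardinal.add_lt_of_lt hχ.le hcard hcard')) hχ₁)

section Elementarity

open FirstOrder Language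

attribute [local instance] memStruct

def memF {α : Type*} {n : ℕ} (t u : memLang.Term (α ⊕ Fin n)) : memLang.BoundedFormula α n :=
  Relations.boundedFormula₂ memRel.mem t u

infixl:88 " ∈' " => memF

abbrev fv {α : Type*} {n : ℕ} (i : α) : memLang.Term (α ⊕ Fin n) := Term.var (Sum.inl i)

@[simp] lemma realize_memF {A : ZFSet} {α : Type*} {n : ℕ} {t u : memLang.Term (α ⊕ Fin n)}
    {v : α → {x // x ∈ A}} {xs : Fin n → {x // x ∈ A}} :
    (t ∈' u).Realize v xs ↔ (t.realize (Sum.elim v xs)).1 ∈ (u.realize (Sum.elim v xs)).1 :=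
  Iff.rfl

def emptyF : memLang.Formula (Fin 1) := ∀' ∼(&0 ∈' fv 0)

def insertF : memLang.Formula (Fin 3) := ∀' (&0 ∈' fv 2 ⇔ (&0 =' fv 0 ⊔ &0 ∈' fv 1))

-- `x` is the only common element of the members of `pair x y`, and if `y ≠ x`, then `y` is the
-- only element of a member of `pair x y` other than `x`.
def fstF : memLang.Formula (Fin 2) := ∀' (&0 ∈' fv 0 ⟹ fv 1 ∈' &0)

def sndF : memLang.Formula (Fin 3) := ∃' (&0 ∈' fv 0 ⊓ fv 2 ∈' &0) ⊓ ∼(fv 2 =' fv 1)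

def boundF : memLang.Formula (Fin 4) :=
  fv 3 ∈' fv 0 ⊓ fv 1 ∈' fv 3 ⊓
    ∀' (&0 ∈' fv 2 ⟹ ∀' (&1 ∈' &0 ⟹ ∀' (&2 ∈' &1 ⟹ &2 ∈' fv 3)))

section Transitive

variable {H : ZFSet} (hH : H.IsTransitive)
include hH

lemma realize_emptyF (v : Fin 1 → {x // x ∈ H}) : emptyF.Realize v ↔ (v 0).1 = ∅ := by
  conv_lhs => simp [emptyF, Formula.Realize, Fin.snoc]
  rw [eq_empty]
  exact ⟨fun h w hw => h w (hH _ (v 0).2 hw) hw, fun h w _ => h w⟩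

lemma realize_fstF (v : Fin 2 → {x // x ∈ H}) :
    fstF.Realize v ↔ ∀ w ∈ (v 0).1, (v 1).1 ∈ w := by
  simp [fstF, Formula.Realize, Fin.snoc]
  exact ⟨fun h w hw => h w (hH _ (v 0).2 hw) hw, fun h w _ => h w⟩

lemma realize_insertF (v : Fin 3 → {x // x ∈ H}) :
    insertF.Realize v ↔ (v 2).1 = insert (v 0).1 (v 1).1 := by
  conv_lhs => simp [insertF, Formula.Realize, Fin.snoc]
  refine ⟨fun h => ext fun w => ?_, fun h w hw => ?_⟩
  · rw [mem_insert_iff]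
    refine ⟨fun hw => ((h w (hH _ (v 2).2 hw)).1 hw).imp_left (congrArg Subtype.val), ?_⟩
    rintro (rfl | hw)
    · exact (h _ (v 0).2).2 (Or.inl rfl)
    · exact (h w (hH _ (v 1).2 hw)).2 (Or.inr hw)
  · rw [h, mem_insert_iff, Subtype.ext_iff]

lemma realize_sndF (v : Fin 3 → {x // x ∈ H}) :
    sndF.Realize v ↔ (∃ w ∈ (v 0).1, (v 2).1 ∈ w) ∧ (v 2).1 ≠ (v 1).1 := by
  conv_lhs => simp [sndF, Formula.Realize, Fin.snoc]
  rw [Subtype.ext_iff]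
  exact and_congr_left' ⟨fun ⟨w, hw, _, h⟩ => ⟨w, hw, h⟩,
    fun ⟨w, hw, h⟩ => ⟨w, hw, hH _ (v 0).2 hw, h⟩⟩

lemma realize_boundF (v : Fin 4 → {x // x ∈ H}) :
    boundF.Realize v ↔ (v 3).1 ∈ (v 0).1 ∧ (v 1).1 ∈ (v 3).1 ∧
      ∀ z ∈ (v 2).1, ∀ w ∈ z, ∀ u ∈ w, u ∈ (v 3).1 := by
  conv_lhs => simp [boundF, Formula.Realize, Fin.snoc]
  rw [and_assoc]
  refine and_congr_right' (and_congr_right' ⟨fun h z hz w hw u hu => ?_,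
    fun h z _ hz w _ hw u _ hu => h z hz w hw u hu⟩)
  have hzH := hH _ (v 2).2 hz
  have hwH := hH _ hzH hw
  exact h z hzH hz w hwH hw u (hH _ hwH hu) hu

end Transitive

lemma ElemSub.realize_iff {N H : ZFSet} (hN : ElemSub N H) {n : ℕ} (φ : memLang.Formula (Fin n))
    (v : Fin n → {x // x ∈ N}) :
    φ.Realize v ↔ φ.Realize (fun i => (⟨(v i).1, hN.1 (v i).2⟩ : {x // x ∈ H})) :=
  hN.2 n φ (fun i => ⟨(v i).1, hN.1 (v i).2⟩) fun i => (v i).2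

lemma ElemSub.exists_mem {N H : ZFSet} (hN : ElemSub N H) {k : ℕ}
    (φ : memLang.Formula (Fin (k + 1))) (v : Fin k → {x // x ∈ H}) (hv : ∀ i, (v i).1 ∈ N)
    (h : ∃ a, φ.Realize (Fin.snoc v a)) :
    ∃ a : {x // x ∈ H}, a.1 ∈ N ∧ φ.Realize (Fin.snoc v a) := by
  let ψ : memLang.Formula (Fin k) := (φ.relabel finSumFinEquiv.symm).iExs (Fin 1)
  have hψ : ∀ {A : ZFSet} (w : Fin k → {x // x ∈ A}),
      ψ.Realize w ↔ ∃ a, φ.Realize (Fin.snoc w a) := by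
    intro A w
    have key : ∀ i : Fin 1 → {x // x ∈ A},
        Sum.elim w i ∘ finSumFinEquiv.symm = Fin.snoc w (i 0) := by
      intro i
      funext j
      refine Fin.lastCases ?_ (fun j => ?_) j <;> simp
    simp only [ψ, Formula.realize_iExs, Formula.realize_relabel, key]
    exact ⟨fun ⟨i, h⟩ => ⟨i 0, h⟩, fun ⟨a, h⟩ => ⟨fun _ => a, h⟩⟩
  obtain ⟨a, ha⟩ := (hψ _).1 ((hN.2 k ψ v hv).2 ((hψ v).2 h))
  refine ⟨⟨a.1, hN.1 a.2⟩, a.2, ?_⟩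
  convert (hN.realize_iff φ _).1 ha using 2 with i
  refine Fin.lastCases ?_ (fun i => ?_) i <;> simp

lemma ElemSub.mem_of_realize_iff {N H : ZFSet} (hN : ElemSub N H) {k : ℕ}
    (φ : memLang.Formula (Fin (k + 1))) (v : Fin k → {x // x ∈ H}) (hv : ∀ i, (v i).1 ∈ N)
    {b : ZFSet} (hb : b ∈ H) (hφ : ∀ a, φ.Realize (Fin.snoc v a) ↔ a.1 = b) : b ∈ N := by
  obtain ⟨a, haN, ha⟩ := hN.exists_mem φ v hv ⟨⟨b, hb⟩, (hφ _).2 rfl⟩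
  exact (hφ a).1 ha ▸ haN

namespace ElemSub

variable {N H : ZFSet} (hN : ElemSub N H)
include hN

lemma empty_mem (hH : IsClosedTransitive H) : ∅ ∈ N :=
  hN.mem_of_realize_iff emptyF ![] (by simp) hH.empty_mem fun a => by
    simpa using realize_emptyF hH.isTransitive (Fin.snoc ![] a)

lemma insert_mem (hH : IsClosedTransitive H) {x y : ZFSet} (hx : x ∈ N) (hy : y ∈ N) :
    insert x y ∈ N :=
  hN.mem_of_realize_iff insertF ![⟨x, hN.1 hx⟩, ⟨y, hN.1 hy⟩]
    (by simp [Fin.forall_fin_two, hx, hy]) (hH.insert_mem x (hN.1 hx) y (hN.1 hy)) fun a => by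
    simpa using realize_insertF hH.isTransitive (Fin.snoc ![⟨x, hN.1 hx⟩, ⟨y, hN.1 hy⟩] a)

lemma singleton_mem (hH : IsClosedTransitive H) {x : ZFSet} (hx : x ∈ N) : {x} ∈ N := by
  rw [← LawfulSingleton.insert_empty_eq]
  exact hN.insert_mem hH hx (hN.empty_mem hH)

lemma pair_mem (hH : IsClosedTransitive H) {x y : ZFSet} (hx : x ∈ N) (hy : y ∈ N) :
    pair x y ∈ N :=
  hN.insert_mem hH (hN.singleton_mem hH hx)
    (hN.singleton_mem hH (hN.insert_mem hH hx (hN.singleton_mem hH hy)))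

lemma fst_mem_of_pair_mem (hH : H.IsTransitive) {x y : ZFSet} (h : pair x y ∈ N) : x ∈ N := by
  have hpH := hN.1 h
  refine hN.mem_of_realize_iff fstF ![⟨pair x y, hpH⟩] (by simp [h])
    (hH _ (hH _ hpH (by simp [pair] : {x} ∈ pair x y)) (mem_singleton.2 rfl)) fun a => ?_
  rw [realize_fstF hH]
  simp +contextual [pair]

lemma snd_mem_of_pair_mem (hH : H.IsTransitive) {x y : ZFSet} (h : pair x y ∈ N) : y ∈ N := by
  have hx := hN.fst_mem_of_pair_mem hH h
  by_cases hxy : y = x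
  · exact hxy ▸ hx
  have hpH := hN.1 h
  refine hN.mem_of_realize_iff sndF ![⟨pair x y, hpH⟩, ⟨x, hN.1 hx⟩]
    (by simp [Fin.forall_fin_two, h, hx])
    (hH _ (hH _ hpH (by simp [pair] : {x, y} ∈ pair x y)) (by simp)) fun a => ?_
  rw [realize_sndF hH]
  simp [pair]
  refine ⟨fun ⟨h, h'⟩ => h.resolve_left h', ?_⟩
  rintro rfl
  exact ⟨Or.inr rfl, hxy⟩

lemma exists_mem_bound (hH : H.IsTransitive) {S c₀ s : ZFSet} (hS : S ∈ N) (hc₀ : c₀ ∈ N)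
    (hs : s ∈ N) (h : ∃ c ∈ S, c₀ ∈ c ∧ ∀ z ∈ s, ∀ w ∈ z, ∀ u ∈ w, u ∈ c) :
    ∃ c ∈ N, c ∈ S ∧ c₀ ∈ c ∧ ∀ z ∈ s, ∀ w ∈ z, ∀ u ∈ w, u ∈ c := by
  obtain ⟨c, hcS, hc⟩ := h
  obtain ⟨a, haN, ha⟩ := hN.exists_mem boundF ![⟨S, hN.1 hS⟩, ⟨c₀, hN.1 hc₀⟩, ⟨s, hN.1 hs⟩]
    (by simp [Fin.forall_fin_succ, hS, hc₀, hs])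
    ⟨⟨c, hH _ (hN.1 hS) hcS⟩, by simpa [realize_boundF hH] using ⟨hcS, hc⟩⟩
  simp only [realize_boundF hH] at ha
  simp at ha
  exact ⟨a.1, haN, ha⟩

end ElemSub

end Elementarity

noncomputable def supInter (ω₁ N : ZFSet) : ZFSet := ⋃₀ zinter ω₁ N

lemma mem_supInter {ω₁ N b : ZFSet} : b ∈ supInter ω₁ N ↔ ∃ c ∈ ω₁, c ∈ N ∧ b ∈ c := by
  simp [supInter, mem_sUnion, mem_zinter, and_assoc]

namespace IsOmegaOne

variable {ω₁ N : ZFSet} (hω : IsOmegaOne ω₁)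
include hω

lemma mem_of_mem_supInter {b : ZFSet} (hb : b ∈ supInter ω₁ N) : b ∈ ω₁ := by
  obtain ⟨c, hc, -, hbc⟩ := mem_supInter.1 hb
  exact hω.isOrdinal.mem_trans hbc hc

lemma isOrdinal_supInter : (supInter ω₁ N).IsOrdinal := by
  refine isOrdinal_iff_forall_mem_isOrdinal.2 ⟨fun b hb x hx => ?_,
    fun b hb => hω.isOrdinal.mem (hω.mem_of_mem_supInter hb)⟩
  obtain ⟨c, hc, hcN, hbc⟩ := mem_supInter.1 hb
  exact mem_supInter.2 ⟨c, hc, hcN, (hω.isOrdinal.mem hc).mem_trans hx hbc⟩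

lemma supInter_mem (hN : N.toSet.Countable) : supInter ω₁ N ∈ ω₁ := by
  have hcount : (⋃ c ∈ {c | c ∈ ω₁ ∧ c ∈ N}, c.toSet).Countable :=
    (hN.mono fun c hc => hc.2).biUnion fun c hc => hω.countable_of_mem c hc.1
  refine hω.mem_of_countable hω.isOrdinal_supInter (hcount.mono fun b hb => ?_)
  obtain ⟨c, hc, hcN, hbc⟩ := mem_supInter.1 hb
  exact Set.mem_biUnion (x := c) ⟨hc, hcN⟩ hbc

lemma mem_supInter_of_mem {H : ZFSet} (hH : IsClosedTransitive H) (hN : ElemSub N H) {c : ZFSet}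
    (hc : c ∈ ω₁) (hcN : c ∈ N) : c ∈ supInter ω₁ N :=
  mem_supInter.2 ⟨insert c c, hω.insert_self_mem hc, hN.insert_mem hH hcN hcN, mem_insert c c⟩

lemma exists_mem_forall_mem_of_finite (hemptyN : ∅ ∈ N) {P : Set ZFSet} (hP : P.Finite)
    (hPδ : ∀ b ∈ P, b ∈ supInter ω₁ N) : ∃ γ ∈ ω₁, γ ∈ N ∧ ∀ b ∈ P, b ∈ γ := by
  rcases P.eq_empty_or_nonempty with rfl | hne
  · exact ⟨∅, hω.empty_mem, hemptyN, by simp⟩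
  obtain ⟨b, hbP, hmax⟩ := Set.exists_max_image P rank hP hne
  obtain ⟨γ, hγ, hγN, hbγ⟩ := mem_supInter.1 (hPδ b hbP)
  have hord : ∀ x ∈ P, x.IsOrdinal := fun x hx =>
    hω.isOrdinal.mem (hω.mem_of_mem_supInter (hPδ x hx))
  refine ⟨γ, hγ, hγN, fun x hx => ?_⟩
  exact (hord x hx).mem_of_subset_of_mem (hω.isOrdinal.mem hγ)
    ((IsOrdinal.rank_le_iff_subset (hord x hx) (hord b hbP)).1 (hmax x hx)) hbγ

end IsOmegaOne

section Extensions

variable {ω₁ S H N : ZFSet} (hω : IsOmegaOne ω₁) (hH : IsClosedTransitive H) (hN : ElemSub N H)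
  (hS : StationaryIn ω₁ S) (hSN : S ∈ N)
include hω hH hN hS hSN

lemma exists_extension_straddling (hNc : N.toSet.Countable) (hδS : supInter ω₁ N ∉ S) {p : ZFSet}
    (hp : IsPS ω₁ S p) : ∃ u, p ⊆ u ∧ IsPS ω₁ S u ∧
      ∃ α β, pair α β ∈ u ∧ α ∈ supInter ω₁ N ∧ supInter ω₁ N ⊆ β := by
  set δ := supInter ω₁ N
  have hδ : δ.IsOrdinal := hω.isOrdinal_supInter
  by_cases hsealed : ∃ a b, pair a b ∈ p ∧ a ∈ δ ∧ δ ⊆ b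
  · exact ⟨p, subset_rfl, hp, hsealed⟩
  push Not at hsealed
  have hbord : ∀ a b, pair a b ∈ p → b.IsOrdinal := fun a b hab =>
    hω.isOrdinal.mem (hp.of_pair_mem hab).2.1
  have hsnd : ∀ a b, pair a b ∈ p → a ∈ δ → b ∈ δ := fun a b hab ha =>
    (hδ.not_subset_iff_mem (hbord a b hab)).1 (hsealed a b hab ha)
  obtain ⟨γ, hγ, hγN, hγP⟩ := hω.exists_mem_forall_mem_of_finite (hN.empty_mem hH)
    (P := {b | ∃ a, pair a b ∈ p ∧ b ∈ δ})
    (hp.finite_field.subset fun b ⟨a, hab, _⟩ => ⟨_, hab, {a, b}, by simp [pair], by simp⟩)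
    fun b ⟨_, _, hb⟩ => hb
  obtain ⟨α, hαN, hαS, hγα, -⟩ := hN.exists_mem_bound hH.isTransitive hSN hγN (hN.empty_mem hH)
    (by obtain ⟨c, hcS, hγc⟩ := hS.exists_mem_gt hω hγ; exact ⟨c, hcS, hγc, by simp⟩)
  have hα : α.IsOrdinal := hω.isOrdinal.mem (hS.1 hαS)
  have hαδ : α ∈ δ := hω.mem_supInter_of_mem hH hN (hS.1 hαS) hαN
  have hbα : ∀ a b, pair a b ∈ p → a ∈ δ → b ∈ α := fun a b hab ha =>
    hα.mem_trans (hγP b ⟨a, hab, hsnd a b hab ha⟩) hγα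
  refine ⟨insert (pair α δ) p, fun z hz => mem_insert_of_mem _ hz,
    hp.insert_pair hαS (hω.supInter_mem hNc) (Or.inl hαδ) fun a b hab => ⟨?_, ?_⟩,
    α, δ, mem_insert _ _, hαδ, subset_rfl⟩
  · rintro ⟨haα, hαb | rfl⟩
    · exact mem_asymm hαb (hbα a b hab (hδ.mem_trans haα hαδ))
    · exact mem_irrefl _ (hbα a _ hab (hδ.mem_trans haα hαδ))
  · rintro ⟨hαa, haδ | rfl⟩
    · have hb := hbα a b hab haδ
      rcases (hp.of_pair_mem hab).2.2 with hab' | rfl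
      · exact mem_asymm ((hbord a b hab).mem_trans hαa hab') hb
      · exact mem_asymm hαa hb
    · exact hδS (hp.of_pair_mem hab).1

lemma exists_insert_pair_self {c₀ s : ZFSet} (hc₀ : c₀ ∈ ω₁) (hc₀N : c₀ ∈ N)
    (hs : IsPS ω₁ S s) (hsN : s ∈ N) :
    ∃ c ∈ N, c ∈ S ∧ c₀ ∈ c ∧ IsPS ω₁ S (insert (pair c c) s) := by
  obtain ⟨m, hm, hmT⟩ := hω.exists_upper_bound
    (T := insert c₀ {u | ∃ z ∈ s, ∃ w ∈ z, u ∈ w}) (hs.finite_field.countable.insert c₀)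
    (by
      rintro u (rfl | ⟨z, hz, w, hw, hu⟩)
      exacts [hc₀, hs.mem_of_mem_field hS.1 z hz w hw u hu])
  obtain ⟨c, hcS, hmc⟩ := hS.exists_mem_gt hω hm
  have hc : c.IsOrdinal := hω.isOrdinal.mem (hS.1 hcS)
  obtain ⟨c', hc'N, hc'S, hc₀c', hc'⟩ := hN.exists_mem_bound hH.isTransitive hSN hc₀N hsN
    ⟨c, hcS, hc.mem_trans (hmT c₀ (Set.mem_insert _ _)) hmc,
      fun z hz w hw u hu => hc.mem_trans (hmT u (Or.inr ⟨z, hz, w, hw, hu⟩)) hmc⟩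
  refine ⟨c', hc'N, hc'S, hc₀c', hs.insert_pair_self hc'S (hS.1 hc'S) fun a b hab =>
    ⟨hc' _ hab {a} (by simp [pair]) a (by simp), hc' _ hab {a, b} (by simp [pair]) b (by simp)⟩⟩

lemma exists_qleQ_first_coord_mem {S₀ S₁ i c₀ d : ZFSet} (hiN : i ∈ N)
    (hiS : ∀ p, IsQ ω₁ S₀ S₁ (pair i p) ↔ IsPS ω₁ S p) (hc₀ : c₀ ∈ ω₁) (hc₀N : c₀ ∈ N)
    (hd : IsQ ω₁ S₀ S₁ d) (hdN : d ∈ N) :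
    ∃ d', ((IsQ ω₁ S₀ S₁ d' ∧ d' ∈ N) ∧
      ∀ s, d' = pair i s → ∃ a b, pair a b ∈ s ∧ c₀ ∈ a ∧ a ∈ supInter ω₁ N) ∧ QleQ d' d := by
  by_cases hdi : ∃ s, d = pair i s
  · obtain ⟨s, rfl⟩ := hdi
    have hsN := hN.snd_mem_of_pair_mem hH.isTransitive hdN
    obtain ⟨c, hcN, hcS, hc₀c, hs'⟩ :=
      exists_insert_pair_self hω hH hN hS hSN hc₀ hc₀N ((hiS s).1 hd) hsN
    refine ⟨pair i (insert (pair c c) s), ⟨⟨(hiS _).2 hs', ?_⟩, fun s' e => ?_⟩,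
      qleQ_pair_iff.2 ⟨_, rfl, fun z hz => mem_insert_of_mem _ hz⟩⟩
    · exact hN.pair_mem hH hiN (hN.insert_mem hH (hN.pair_mem hH hcN hcN) hsN)
    · obtain ⟨-, rfl⟩ := pair_injective e
      exact ⟨c, c, mem_insert _ _, hc₀c, hω.mem_supInter_of_mem hH hN (hS.1 hcS) hcN⟩
  · exact ⟨d, ⟨⟨hd, hdN⟩, fun s e => absurd ⟨s, e⟩ hdi⟩, hd.qleQ_refl⟩

end Extensions

theorem not_exists_stronglyGenericQ {ω₁ S₀ S₁ H N i S : ZFSet} (hω : IsOmegaOne ω₁)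
    (hH : IsClosedTransitive H) (hN : ElemSub N H) (hNc : N.toSet.Countable)
    (hS : StationaryIn ω₁ S) (hSN : S ∈ N) (hiN : i ∈ N)
    (hiS : ∀ p, IsQ ω₁ S₀ S₁ (pair i p) ↔ IsPS ω₁ S p) (hδS : supInter ω₁ N ∉ S) :
    ¬ ∃ q, IsQ ω₁ S₀ S₁ q ∧ QleQ q (pair i ∅) ∧ StronglyGenericQ ω₁ S₀ S₁ N q := by
  rintro ⟨q, hq, hqi, hgen⟩
  obtain ⟨p, rfl, -⟩ := qleQ_pair_iff.1 hqi
  obtain ⟨u, hpu, hu, α, β, hαβ, hαδ, hδβ⟩ :=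
    exists_extension_straddling hω hH hN hS hSN hNc hδS ((hiS p).1 hq)
  obtain ⟨c₀, hc₀, hc₀N, hαc₀⟩ := mem_supInter.1 hαδ
  let D : Set ZFSet := {d | (IsQ ω₁ S₀ S₁ d ∧ d ∈ N) ∧
    ∀ s, d = pair i s → ∃ a b, pair a b ∈ s ∧ c₀ ∈ a ∧ a ∈ supInter ω₁ N}
  have hdense : ∀ d, IsQ ω₁ S₀ S₁ d → d ∈ N → ∃ d' ∈ D, QleQ d' d := fun d hd hdN =>
    exists_qleQ_first_coord_mem hω hH hN hS hSN hiN hiS hc₀ hc₀N hd hdN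
  obtain ⟨d, hdD, r, hr, hru, hrd⟩ := hgen D (fun d hd => hd.1) hdense (pair i u)
    ((hiS u).2 hu) (qleQ_pair_iff.2 ⟨u, rfl, hpu⟩)
  obtain ⟨w, rfl, huw⟩ := qleQ_pair_iff.1 hru
  obtain ⟨s, rfl, hsw⟩ := pair_qleQ_iff.1 hrd
  obtain ⟨a, b, hab, hc₀a, haδ⟩ := hdD.2 s rfl
  exact ((hiS w).1 hr).2.2 α β a b (huw hαβ) (hsw hab)
    ⟨(hω.isOrdinal.mem (hω.mem_of_mem_supInter haδ)).mem_trans hαc₀ hc₀a, Or.inl (hδβ haδ)⟩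

theorem stmt_17_general (omega1 : ZFSet) (hω1 : IsOrd omega1)
    (hω1unc : ¬ omega1.toSet.Countable)
    (hω1least : ∀ α ∈ omega1, ZFSet.toSet α |>.Countable)
    (S₀ S₁ : ZFSet)
    (hstat₀ : StationaryIn omega1 S₀) (hstat₁ : StationaryIn omega1 S₁)
    (hdisj : zinter S₀ S₁ = ∅)
    (χ : Cardinal.{1}) (hχ : Cardinal.aleph0 < χ)
    (Hχ : ZFSet)
    (hHχ : ∀ x : ZFSet, x ∈ Hχ ↔
      ∃ t : ZFSet, t.IsTransitive ∧ x ⊆ t ∧ Cardinal.mk t.toSet < χ)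
    (N : ZFSet) (hNc : N.toSet.Countable) (hN : ElemSub N Hχ)
    (hS₀N : S₀ ∈ N) (hS₁N : S₁ ∈ N) :
    ∃ i : ZFSet, (i = ∅ ∨ i = {∅}) ∧
      ¬ ∃ q : ZFSet, IsQ omega1 S₀ S₁ q ∧ QleQ q (ZFSet.pair i ∅) ∧
        StronglyGenericQ omega1 S₀ S₁ N q := by
  have hω : IsOmegaOne omega1 := ⟨hω1.isOrdinal, hω1unc, hω1least⟩
  have hH := isClosedTransitive_of_forall_mem_iff hχ hHχ
  have hempty := hN.empty_mem hH
  by_cases hδ : supInter omega1 N ∈ S₀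
  · have hδ₁ : supInter omega1 N ∉ S₁ := fun h =>
      zinter_ne_empty.2 ⟨_, hδ, h⟩ hdisj
    exact ⟨{∅}, Or.inr rfl, not_exists_stronglyGenericQ hω hH hN hNc hstat₁ hS₁N
      (hN.singleton_mem hH hempty) (fun _ => isQ_pair_singleton_empty_iff) hδ₁⟩
  · exact ⟨∅, Or.inl rfl, not_exists_stronglyGenericQ hω hH hN hNc hstat₀ hS₀N hempty
      (fun _ => isQ_pair_empty_iff) hδ⟩

/-- let `S₀` and `S₁` be disjoint stationary subsets of `ω₁` and
`Q` the disjoint sum of the club-shooting posets `P_{S₀}` and `P_{S₁}`.  Then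
`Q` is not strongly proper on a stationary set: for every countable
`N ≺ H(χ)` containing the relevant parameters `ω₁, S₀, S₁`, there is
`i ∈ {0,1}` such that the condition `(i, ∅)` has no strongly `N`-generic
extension. -/
theorem stmt_17 (omega1 : ZFSet) (hω1 : IsOrd omega1)
    (hω1unc : ¬ omega1.toSet.Countable)
    (hω1least : ∀ α ∈ omega1, ZFSet.toSet α |>.Countable)
    (S₀ S₁ : ZFSet)
    (hstat₀ : StationaryIn omega1 S₀) (hstat₁ : StationaryIn omega1 S₁)
    (hdisj : zinter S₀ S₁ = ∅)
    (χ : Cardinal.{1}) (hχ : Cardinal.aleph0 < χ)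
    (Hχ : ZFSet)
    (hHχ : ∀ x : ZFSet, x ∈ Hχ ↔
      ∃ t : ZFSet, t.IsTransitive ∧ x ⊆ t ∧ Cardinal.mk t.toSet < χ)
    (N : ZFSet) (hNc : N.toSet.Countable) (hN : ElemSub N Hχ)
    (hω1N : omega1 ∈ N) (hS₀N : S₀ ∈ N) (hS₁N : S₁ ∈ N) :
    ∃ i : ZFSet, (i = ∅ ∨ i = {∅}) ∧
      ¬ ∃ q : ZFSet, IsQ omega1 S₀ S₁ q ∧ QleQ q (ZFSet.pair i ∅) ∧
        StronglyGenericQ omega1 S₀ S₁ N q :=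
  stmt_17_general omega1 hω1 hω1unc hω1least S₀ S₁ hstat₀ hstat₁ hdisj χ hχ Hχ hHχ N hNc hN hS₀N
    hS₁N
end
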